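/- arXiv:1608.07600 — 3 statements merged into one kernel-verified Lean document; each statement's English description precedes it below -/
import Mathlib

section
/- Let R be a Noetherian ring, I an ideal, and x ∈ R. For every k ≥ 0 there is an isomorphism of R-modules (I + (x^k))/(I + (x^{k+1})) ≅ R/((I : x^k) + (x)). Consequently, if R/(I,x^n) has finite length for all n, then length(R/(I, x^{k+1})) = length(R/(I, x^k)) + length(R/((I : x^k) + (x))). -/
open Filter IsLocalRing

noncomputable section

variable {R : Type*} [CommRing R]

/-- The `q`-th Frobenius power `I^{[q]}` of an ideal `I`. -/
def fpow (I : Ideal R) (q : ℕ) : Ideal R := Ideal.span ((fun x => x ^ q) '' (I : Set R))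

/-- The length of `R ⧸ I` as an `R`-module, as a natural number. -/
def qlen (I : Ideal R) : ℕ := (WithBot.unbotD 0 (Order.krullDim (Submodule R (R ⧸ I)))).toNat

/-- The length of `R ⧸ I` as an `R`-module, in `ℕ∞`. -/
def lenE (I : Ideal R) : ℕ∞ := WithBot.unbotD 0 (Order.krullDim (Submodule R (R ⧸ I)))

/-- The tight closure `I*` of an ideal `I` in a ring of characteristic `p`. -/
def tightClosure (p : ℕ) (I : Ideal R) : Ideal R :=
  Ideal.span {x | ∃ c : R, (∀ P ∈ minimalPrimes R, c ∉ P) ∧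
    ∃ e₀ : ℕ, ∀ e ≥ e₀, c * x ^ p ^ e ∈ fpow I (p ^ e)}

/-- `c` is a test element: `c` avoids all minimal primes and for every ideal `I`,
`x ∈ I*` iff `c x^q ∈ I^{[q]}` for all `q = p^e`. -/
def IsTestElement (p : ℕ) (c : R) : Prop :=
  (∀ P ∈ minimalPrimes R, c ∉ P) ∧
    ∀ (I : Ideal R) (x : R), x ∈ tightClosure p I ↔ ∀ e : ℕ, c * x ^ p ^ e ∈ fpow I (p ^ e)

end

/-!
Multiplication by `x^k` maps `R` onto `(I + (x^k)) / (I + (x^{k+1}))`, and `r x^k` lies in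
`I + (x^{k+1})` exactly when `r ∈ (I : x^k) + (x)`. The length formula is then additivity of
length along `0 → (I + (x^k)) / (I + (x^{k+1})) → R / (I + (x^{k+1})) → R / (I + (x^k)) → 0`.
-/

namespace Submodule

variable {R X : Type*} [Ring R] [AddCommGroup X] [Module R X]

theorem length_quotient_eq_add_of_le {M N : Submodule R X} (hMN : M ≤ N) :
    Module.length R (X ⧸ M) =
      Module.length R (N ⧸ M.comap N.subtype) + Module.length R (X ⧸ N) := by
  refine Module.length_eq_add_of_exact ((M.comap N.subtype).mapQ M N.subtype le_rfl)
    (factor hMN) ?_ (factor_surjective hMN) ?_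
  · rw [← LinearMap.ker_eq_bot, ker_mapQ, mkQ_map_self]
  · rw [LinearMap.exact_iff, factor, ker_mapQ, range_mapQ, range_subtype, comap_id]

end Submodule

namespace Ideal

variable {R : Type*} [CommRing R]

theorem mul_mem_sup_span_mul_iff (I : Ideal R) (a b r : R) :
    r * a ∈ I ⊔ span {a * b} ↔ r ∈ I.colon (span {a}) ⊔ span {b} := by
  rw [sup_comm I, sup_comm (I.colon _), mem_span_singleton_sup, mem_span_singleton_sup]
  simp only [mem_colon_span_singleton]
  constructor
  · rintro ⟨s, i, hi, h⟩
    exact ⟨s, r - s * b, by convert hi using 1; linear_combination -h, by ring⟩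
  · rintro ⟨s, c, hc, rfl⟩
    exact ⟨s, c * a, hc, by ring⟩

/-- Induced by `r ↦ r * a`. -/
noncomputable def supSpanQuotSupSpanMulEquiv (I : Ideal R) (a b : R) :
    (↥(I ⊔ span {a}) ⧸ Submodule.comap (I ⊔ span {a}).subtype (I ⊔ span {a * b})) ≃ₗ[R]
      R ⧸ (I.colon (span {a}) ⊔ span {b}) :=
  let N := I ⊔ span {a}
  let K := Submodule.comap N.subtype (I ⊔ span {a * b})
  let φ := LinearMap.toSpanSingleton R (N ⧸ K)
    (K.mkQ ⟨a, Submodule.mem_sup_right (mem_span_singleton_self a)⟩)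
  have hker : LinearMap.ker φ = I.colon (span {a}) ⊔ span {b} := by
    ext r
    rw [LinearMap.mem_ker, ← mul_mem_sup_span_mul_iff]
    exact Submodule.Quotient.mk_eq_zero K
  have hsurj : Function.Surjective φ := by
    rintro ⟨⟨z, hz⟩⟩
    obtain ⟨i, hi, y, hy, rfl⟩ := Submodule.mem_sup.mp hz
    obtain ⟨s, rfl⟩ := mem_span_singleton'.mp hy
    refine ⟨s, (Submodule.Quotient.eq K).mpr ?_⟩
    rw [Submodule.mem_comap]
    convert Submodule.mem_sup_left (I.neg_mem hi) using 1
    simp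
  (Submodule.quotEquivOfEq _ _ hker.symm ≪≫ₗ φ.quotKerEquivOfSurjective hsurj).symm

theorem length_quotient_sup_span_mul (I : Ideal R) (a b : R) :
    Module.length R (R ⧸ (I ⊔ span {a * b})) =
      Module.length R (R ⧸ (I.colon (span {a}) ⊔ span {b})) +
        Module.length R (R ⧸ (I ⊔ span {a})) := by
  have hle : I ⊔ span {a * b} ≤ I ⊔ span {a} :=
    sup_le_sup_left (span_singleton_le_span_singleton.mpr (dvd_mul_right a b)) I
  rw [Submodule.length_quotient_eq_add_of_le hle, (supSpanQuotSupSpanMulEquiv I a b).length_eq]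

end Ideal

theorem qlen_eq_toNat_length {R : Type*} [CommRing R] (I : Ideal R) :
    qlen I = (Module.length R (R ⧸ I)).toNat := by
  rw [qlen, ← Module.coe_length, WithBot.unbotD_coe]

theorem stmt1_general {R : Type*} [CommRing R] (I : Ideal R) (x : R) :
    (∀ k : ℕ, Nonempty
      ((↥(I ⊔ Ideal.span {x ^ k}) ⧸
          Submodule.comap (I ⊔ Ideal.span {x ^ k}).subtype
            ((I ⊔ Ideal.span {x ^ (k + 1)}).restrictScalars R)) ≃ₗ[R]
        R ⧸ (I.colon (Ideal.span {x ^ k}) ⊔ Ideal.span {x}))) ∧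
    ((∀ n : ℕ, IsFiniteLength R (R ⧸ (I ⊔ Ideal.span {x ^ n}))) →
      ∀ k : ℕ,
        qlen (I ⊔ Ideal.span {x ^ (k + 1)}) =
          qlen (I ⊔ Ideal.span {x ^ k}) +
            qlen (I.colon (Ideal.span {x ^ k}) ⊔ Ideal.span {x})) := by
  refine ⟨fun k => ?_, fun hfin k => ?_⟩
  · rw [pow_succ, Submodule.restrictScalars_self]
    exact ⟨Ideal.supSpanQuotSupSpanMulEquiv I _ x⟩
  have hlen := Ideal.length_quotient_sup_span_mul I (x ^ k) x
  rw [← pow_succ] at hlen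
  have hfinite := Module.length_ne_top_iff.mpr (hfin (k + 1))
  rw [hlen, Ne, ENat.add_eq_top, not_or] at hfinite
  rw [qlen_eq_toNat_length, qlen_eq_toNat_length, qlen_eq_toNat_length, hlen,
    ENat.toNat_add hfinite.1 hfinite.2, add_comm]

/-- `(I + (x^k))/(I + (x^{k+1})) ≅ R/((I : x^k) + (x))`, and the
resulting additivity of lengths when all the quotients have finite length. -/
theorem stmt1 {R : Type*} [CommRing R] [IsNoetherianRing R] (I : Ideal R) (x : R) :
    (∀ k : ℕ, Nonempty
      ((↥(I ⊔ Ideal.span {x ^ k}) ⧸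
          Submodule.comap (I ⊔ Ideal.span {x ^ k}).subtype
            ((I ⊔ Ideal.span {x ^ (k + 1)}).restrictScalars R)) ≃ₗ[R]
        R ⧸ (I.colon (Ideal.span {x ^ k}) ⊔ Ideal.span {x}))) ∧
    ((∀ n : ℕ, IsFiniteLength R (R ⧸ (I ⊔ Ideal.span {x ^ n}))) →
      ∀ k : ℕ,
        qlen (I ⊔ Ideal.span {x ^ (k + 1)}) =
          qlen (I ⊔ Ideal.span {x ^ k}) +
            qlen (I.colon (Ideal.span {x ^ k}) ⊔ Ideal.span {x})) :=
  stmt1_general I x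
end

section
/- Let (R, m) be a Noetherian local ring of characteristic p > 0 with a test element c, and let I, J be proper ideals of R. Then the tight closure I* equals the intersection over all q = p^e of the tight closures (I + J^{[q]})*. -/
open Filter IsLocalRing

/-!
Since `c` is a test element, `x ∈ K*` amounts to `c x^q ∈ K^{[q]}` for every `q`. If `x` lies in
every `(I + J^{[q]})*`, then for each fixed `q'` the element `c x^{q'}` lies in every
`(I + J^{[q]})^{[q']} = I^{[q']} + J^{[q q']} ⊆ I^{[q']} + J^n` (with `n ≤ q q'`), hence in
`I^{[q']}` by Krull's intersection theorem applied to the finite module `R ⧸ I^{[q']}`.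
-/

section Frobenius

variable {R : Type*} [CommRing R]

lemma fpow_le_pow (I : Ideal R) (q : ℕ) : fpow I q ≤ I ^ q := by
  rw [fpow, Ideal.span_le]
  rintro _ ⟨a, ha, rfl⟩
  exact Ideal.pow_mem_pow ha q

lemma fpow_mono {I K : Ideal R} (h : I ≤ K) (q : ℕ) : fpow I q ≤ fpow K q :=
  Ideal.span_mono (Set.image_mono h)

variable (p : ℕ) [ExpChar R p]

lemma fpow_eq_map_iterateFrobenius (I : Ideal R) (e : ℕ) :
    fpow I (p ^ e) = I.map (iterateFrobenius R p e) :=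
  rfl

lemma fpow_sup (I K : Ideal R) (e : ℕ) :
    fpow (I ⊔ K) (p ^ e) = fpow I (p ^ e) ⊔ fpow K (p ^ e) := by
  simp only [fpow_eq_map_iterateFrobenius, Ideal.map_sup]

lemma fpow_fpow (J : Ideal R) (n e : ℕ) :
    fpow (fpow J (p ^ n)) (p ^ e) = fpow J (p ^ (e + n)) := by
  simp only [fpow_eq_map_iterateFrobenius, Ideal.map_map, iterateFrobenius_add]

lemma fpow_sup_fpow_le_sup_pow (hp : 1 < p) (I J : Ideal R) (n e : ℕ) :
    fpow (I ⊔ fpow J (p ^ n)) (p ^ e) ≤ fpow I (p ^ e) ⊔ J ^ n := by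
  have hn : n ≤ p ^ (e + n) := calc
    n ≤ p ^ n := (Nat.lt_pow_self hp).le
    _ ≤ p ^ (e + n) := Nat.pow_le_pow_right (expChar_pos R p) (Nat.le_add_left n e)
  rw [fpow_sup, fpow_fpow]
  exact sup_le_sup_left ((fpow_le_pow J _).trans (Ideal.pow_le_pow_right hn)) _

end Frobenius

lemma tightClosure_mono {R : Type*} [CommRing R] (p : ℕ) {I K : Ideal R} (h : I ≤ K) :
    tightClosure p I ≤ tightClosure p K := by
  apply Ideal.span_mono
  rintro x ⟨c, hc, e₀, he⟩
  exact ⟨c, hc, e₀, fun e he' => fpow_mono h _ (he e he')⟩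

section Krull

variable {R : Type*} [CommRing R] [IsNoetherianRing R] [IsLocalRing R]

/-- Krull's intersection theorem for the finite module `R ⧸ K`. -/
lemma Ideal.iInf_sup_pow_eq_of_isLocalRing (K : Ideal R) {J : Ideal R} (hJ : J ≠ ⊤) :
    ⨅ n : ℕ, (K ⊔ J ^ n) = K := by
  have hsup (n : ℕ) : K ⊔ J ^ n = (J ^ n • ⊤ : Submodule R (R ⧸ K)).comap K.mkQ := by
    rw [← Submodule.range_mkQ K, ← Submodule.map_top, ← Submodule.map_smul'',
      Submodule.comap_map_mkQ, smul_eq_mul, Ideal.mul_top]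
  simp_rw [hsup, ← Submodule.comap_iInf, J.iInf_pow_smul_eq_bot_of_isLocalRing hJ]
  exact Submodule.ker_mkQ K

lemma iInf_fpow_sup_fpow_eq {p : ℕ} [ExpChar R p] (hp : 1 < p) (I : Ideal R) {J : Ideal R}
    (hJ : J ≠ ⊤) (e : ℕ) : ⨅ n : ℕ, fpow (I ⊔ fpow J (p ^ n)) (p ^ e) = fpow I (p ^ e) := by
  refine le_antisymm ?_ (le_iInf fun n => fpow_mono le_sup_left _)
  calc ⨅ n : ℕ, fpow (I ⊔ fpow J (p ^ n)) (p ^ e)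
      ≤ ⨅ n : ℕ, (fpow I (p ^ e) ⊔ J ^ n) := iInf_mono (fpow_sup_fpow_le_sup_pow p hp I J · e)
    _ = fpow I (p ^ e) := (fpow I (p ^ e)).iInf_sup_pow_eq_of_isLocalRing hJ

end Krull

theorem stmt3_general {R : Type*} [CommRing R] [IsNoetherianRing R] [IsLocalRing R]
    (p : ℕ) (hp : p.Prime) [CharP R p] (c : R) (hc : IsTestElement p c)
    (I J : Ideal R) (hJ : J ≠ ⊤) :
    tightClosure p I = ⨅ e : ℕ, tightClosure p (I ⊔ fpow J (p ^ e)) := by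
  have : Fact p.Prime := ⟨hp⟩
  refine le_antisymm (le_iInf fun e => tightClosure_mono p le_sup_left) fun x hx => ?_
  have hx' (n : ℕ) := (hc.2 _ x).mp ((Submodule.mem_iInf _).mp hx n)
  refine (hc.2 I x).mpr fun e => ?_
  rw [← iInf_fpow_sup_fpow_eq hp.one_lt I hJ e, Submodule.mem_iInf]
  exact fun n => hx' n e

/-- With a test element, `I* = ⋂_q (I + J^{[q]})*` for proper ideals `I, J`. -/
theorem stmt3 {R : Type*} [CommRing R] [IsNoetherianRing R] [IsLocalRing R]
    (p : ℕ) (hp : p.Prime) [CharP R p] (c : R) (hc : IsTestElement p c)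
    (I J : Ideal R) (hI : I ≠ ⊤) (hJ : J ≠ ⊤) :
    tightClosure p I = ⨅ e : ℕ, tightClosure p (I ⊔ fpow J (p ^ e)) :=
  stmt3_general p hp c hc I J hJ
end

section
/- Let (R, m) be a Noetherian local ring of dimension d and characteristic p > 0 with a test element, I an m-primary ideal, and (I_q)_q a family of ideals indexed by powers q of p satisfying I^{[q]} ⊆ I_q ⊆ (I^{[q]})*. Then lim_{q→∞} (1/q^d) · length(R/I_q) = e_HK(I). -/
open Filter IsLocalRing

/-! Since `c` is a test element, `c · Iq ⊆ I^{[q]}`, i.e. `Iq ⊆ (I^{[q]} : c)`, and the exact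
sequence `0 → R/(I^{[q]} : c) → R/I^{[q]} → R/(I^{[q]} + cR) → 0` gives
`ℓ(R/Iq) ≤ ℓ(R/I^{[q]}) ≤ ℓ(R/Iq) + ℓ(R/(I^{[q]} + cR))`.
As `c` avoids the minimal primes, `dim R/cR ≤ d - 1`, and since `m^{Nq} ⊆ I^{[q]}` the error term
is at most `ℓ(R/(m^{Nq} + cR)) = O(q^{d-1})` by the growth bound `ℓ(R/(m^n + A)) = O(n^{dim R/A})`.
That bound is proved by induction on `dim R/A`: by prime avoidance either `m` is minimal over `A`
(and the lengths are bounded), or some `z ∈ m` avoids the minimal primes of `A`, so that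
`dim R/(A + zR) < dim R/A` and `ℓ(R/(m^{n+1} + A)) ≤ ℓ(R/(m^n + A)) + ℓ(R/(m^{n+1} + A + zR))`.
Dividing by `q^d` squeezes the limit. -/

section

variable {R : Type*} [CommRing R]

lemma lenE_eq_length (I : Ideal R) : lenE I = Module.length R (R ⧸ I) := by
  rw [lenE, Module.length, WithBot.unbotD_eq_iff]
  simp

lemma lenE_antitone {I J : Ideal R} (h : I ≤ J) : lenE J ≤ lenE I := by
  simp only [lenE_eq_length]
  exact Module.length_le_of_surjective (Submodule.factor h) (Submodule.factor_surjective h)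

@[simp] lemma lenE_top : lenE (⊤ : Ideal R) = 0 := by
  rw [lenE_eq_length, Module.length_eq_zero_iff, Ideal.Quotient.subsingleton_iff]

lemma qlen_eq_toNat_lenE (I : Ideal R) : qlen I = (lenE I).toNat := rfl

lemma qlen_antitone {I J : Ideal R} (h : I ≤ J) (hI : lenE I ≠ ⊤) : qlen J ≤ qlen I :=
  ENat.toNat_le_toNat (lenE_antitone h) hI

lemma lenE_eq_lenE_colon_add (J : Ideal R) (c : R) :
    lenE J = lenE (J.colon {c}) + lenE (J ⊔ Ideal.span {c}) := by
  simp only [lenE_eq_length]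
  let g : R →ₗ[R] R ⧸ J := J.mkQ ∘ₗ LinearMap.toSpanSingleton R R c
  have hker : LinearMap.ker g = J.colon {c} := by
    ext r
    simp [g, Submodule.mem_colon_singleton, -map_mul, Ideal.Quotient.eq_zero_iff_mem]
  let f : R ⧸ J.colon {c} →ₗ[R] R ⧸ J := (J.colon {c}).liftQ g hker.ge
  have hf (s : R) : f (Submodule.Quotient.mk s) = Submodule.Quotient.mk (s * c) := rfl
  refine Module.length_eq_add_of_exact f (Submodule.factor (le_sup_left (b := Ideal.span {c})))
    ?_ (Submodule.factor_surjective _) ?_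
  · rw [← LinearMap.ker_eq_bot, Submodule.ker_liftQ, hker, Submodule.mkQ_map_self]
  · intro y
    obtain ⟨r, rfl⟩ := J.mkQ_surjective y
    rw [Submodule.factor_mk, Submodule.mkQ_apply, Submodule.Quotient.mk_eq_zero, Submodule.mem_sup]
    constructor
    · rintro ⟨j, hj, t, ht, rfl⟩
      obtain ⟨s, rfl⟩ := Ideal.mem_span_singleton'.mp ht
      refine ⟨Submodule.Quotient.mk s, ?_⟩
      rw [hf, Submodule.mkQ_apply, Submodule.Quotient.eq]
      simpa using J.neg_mem hj
    · rintro ⟨y, hy⟩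
      obtain ⟨s, rfl⟩ := Submodule.mkQ_surjective _ y
      rw [Submodule.mkQ_apply, hf, Submodule.mkQ_apply, Submodule.Quotient.eq] at hy
      have : r - s * c ∈ J := by simpa using J.neg_mem hy
      exact ⟨_, this, s * c, Ideal.mul_mem_left _ _ (Ideal.mem_span_singleton_self c), by ring⟩

lemma qlen_le_qlen_add_qlen_sup_span {J L : Ideal R} {c : R} (hJ : lenE J ≠ ⊤) (hJL : J ≤ L)
    (hLc : L ≤ J.colon {c}) : qlen J ≤ qlen L + qlen (J ⊔ Ideal.span {c}) := by
  have hsplit := lenE_eq_lenE_colon_add J c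
  obtain ⟨hcolon, hsup⟩ := WithTop.add_ne_top.mp (hsplit ▸ hJ)
  calc qlen J = qlen (J.colon {c}) + qlen (J ⊔ Ideal.span {c}) := by
        rw [qlen_eq_toNat_lenE, hsplit, ENat.toNat_add hcolon hsup]; rfl
    _ ≤ qlen L + qlen (J ⊔ Ideal.span {c}) :=
        Nat.add_le_add_right (qlen_antitone hLc ((lenE_antitone hJL).trans_lt hJ.lt_top).ne) _

lemma lenE_pow_sup_le_sum (m A : Ideal R) {z : R} (hz : z ∈ m) (n : ℕ) :
    lenE (m ^ n ⊔ A) ≤ ∑ i ∈ Finset.range n, lenE (m ^ (i + 1) ⊔ (A ⊔ Ideal.span {z})) := by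
  induction n with
  | zero => simp [Ideal.one_eq_top]
  | succ n ih =>
    have hcolon : m ^ n ⊔ A ≤ (m ^ (n + 1) ⊔ A).colon {z} := by
      refine sup_le (fun w hw => ?_) (le_sup_right.trans Ideal.le_colon)
      rw [Submodule.mem_colon_singleton, smul_eq_mul, pow_succ]
      exact Ideal.mem_sup_left (Ideal.mul_mem_mul hw hz)
    calc lenE (m ^ (n + 1) ⊔ A)
        = lenE ((m ^ (n + 1) ⊔ A).colon {z}) + lenE (m ^ (n + 1) ⊔ A ⊔ Ideal.span {z}) :=
          lenE_eq_lenE_colon_add _ _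
      _ ≤ lenE (m ^ n ⊔ A) + lenE (m ^ (n + 1) ⊔ (A ⊔ Ideal.span {z})) := by
          rw [sup_assoc]
          exact add_le_add_left (lenE_antitone hcolon) _
      _ ≤ _ := by
          rw [Finset.sum_range_succ]
          exact add_le_add_left ih _

lemma fpow_one (I : Ideal R) : fpow I 1 = I := by
  simp [fpow]

lemma exists_pow_mul_le_fpow {I J : Ideal R} (hJ : J.FG) (hJI : J ≤ I.radical) :
    ∃ N : ℕ, ∀ q, J ^ (N * q) ≤ fpow I q := by
  induction J, hJ using Submodule.fg_induction with
  | singleton x =>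
    obtain ⟨k, hk⟩ : x ∈ I.radical := hJI (Ideal.mem_span_singleton_self x)
    refine ⟨k, fun q => ?_⟩
    rw [Ideal.submodule_span_eq, Ideal.span_singleton_pow, Ideal.span_singleton_le_iff_mem,
      pow_mul]
    exact Ideal.subset_span ⟨x ^ k, hk, rfl⟩
  | sup J₁ J₂ _ _ ih₁ ih₂ =>
    obtain ⟨N₁, hN₁⟩ := ih₁ (le_sup_left.trans hJI)
    obtain ⟨N₂, hN₂⟩ := ih₂ (le_sup_right.trans hJI)
    refine ⟨N₁ + N₂, fun q => ?_⟩
    rw [add_mul]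
    exact Ideal.sup_pow_add_le_pow_sup_pow.trans (sup_le (hN₁ q) (hN₂ q))

lemma IsTestElement.le_colon {p : ℕ} {c : R} (hc : IsTestElement p c) (J : Ideal R) :
    tightClosure p J ≤ J.colon {c} := fun x hx => by
  rw [Submodule.mem_colon_singleton, smul_eq_mul, mul_comm]
  simpa [fpow_one] using (hc.2 J x).mp hx 0

lemma ringKrullDim_quotient_sup_span_add_one_le (A : Ideal R) {z : R}
    (hz : ∀ P ∈ A.minimalPrimes, z ∉ P) :
    ringKrullDim (R ⧸ (A ⊔ Ideal.span {z})) + 1 ≤ ringKrullDim (R ⧸ A) := by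
  have key := Module.supportDim_quotSMulTop_succ_le_of_notMem_minimalPrimes (M := R ⧸ A)
    (x := z) (by rwa [Ideal.annihilator_quotient])
  rw [Module.supportDim_quotient_eq_ringKrullDim] at key
  convert key using 2
  rw [Module.supportDim, Module.support_quotSMulTop, Module.support_eq_zeroLocus,
    Ideal.annihilator_quotient, ringKrullDim_quotient, ← PrimeSpectrum.zeroLocus_span {z},
    ← PrimeSpectrum.zeroLocus_sup]

lemma sup_span_eq_top_of_ringKrullDim_quotient_nonpos (A : Ideal R) {z : R}
    (hz : ∀ P ∈ A.minimalPrimes, z ∉ P) (hA : ringKrullDim (R ⧸ A) ≤ 0) :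
    A ⊔ Ideal.span {z} = ⊤ := by
  by_contra hne
  have := Ideal.Quotient.nontrivial_iff.mpr hne
  have hbot := (ENat.WithBot.add_one_le_zero_iff _).mp
    ((ringKrullDim_quotient_sup_span_add_one_le A hz).trans hA)
  simpa [hbot] using ringKrullDim_nonneg_of_nontrivial (R := R ⧸ (A ⊔ Ideal.span {z}))

variable [IsNoetherianRing R] [IsLocalRing R]

lemma lenE_ne_top_of_le_radical {A : Ideal R} (h : maximalIdeal R ≤ A.radical) :
    lenE A ≠ ⊤ := by
  rcases eq_or_ne A ⊤ with rfl | hA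
  · simp
  have hm : maximalIdeal R ∈ A.minimalPrimes :=
    ⟨⟨inferInstance, le_maximalIdeal hA⟩, fun P hP _ => h.trans (hP.1.radical_le_iff.mpr hP.2)⟩
  have := IsLocalRing.quotient_artinian_of_mem_minimalPrimes_of_isLocalRing A hm
  have : IsArtinian R (R ⧸ A) :=
    isArtinian_of_surjective_algebraMap (Ideal.Quotient.mk_surjective (I := A))
  rw [lenE_eq_length]
  exact Module.length_ne_top

lemma le_radical_or_exists_notMem_minimalPrimes (A : Ideal R) :
    maximalIdeal R ≤ A.radical ∨ ∃ z ∈ maximalIdeal R, ∀ P ∈ A.minimalPrimes, z ∉ P := by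
  by_contra! h
  obtain ⟨hrad, hcover⟩ := h
  have hm : maximalIdeal R ∈ A.minimalPrimes := by
    refine (Ideal.subset_iUnion_iff_mem_of_isMaximal_of_finite
      A.finite_minimalPrimes_of_isNoetherianRing (⊥ : Ideal R) ⊥ (fun P hP _ _ => hP.1.1)
      bot_ne_top bot_ne_top).mp fun z hz => ?_
    obtain ⟨P, hP, hzP⟩ := hcover z hz
    exact Set.mem_biUnion hP hzP
  refine hrad ?_
  rw [← Ideal.sInf_minimalPrimes]
  exact le_sInf fun P hP => hm.2 hP.1 (le_maximalIdeal hP.1.1.ne_top)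

lemma exists_lenE_pow_sup_le_const {A : Ideal R} (h : maximalIdeal R ≤ A.radical) :
    ∃ C : ℕ, ∀ n, lenE (maximalIdeal R ^ n ⊔ A) ≤ C :=
  ⟨(lenE A).toNat, fun _ => (lenE_antitone le_sup_right).trans
    (ENat.natCast_toNat (lenE_ne_top_of_le_radical h)).ge⟩

theorem exists_lenE_pow_sup_le {A : Ideal R} {d : ℕ} (hA : ringKrullDim (R ⧸ A) ≤ d) :
    ∃ C : ℕ, ∀ n, lenE (maximalIdeal R ^ n ⊔ A) ≤ (C * (n + 1) ^ d : ℕ) := by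
  induction d generalizing A with
  | zero =>
    rcases le_radical_or_exists_notMem_minimalPrimes A with hrad | ⟨z, hzm, hz⟩
    · obtain ⟨C, hC⟩ := exists_lenE_pow_sup_le_const hrad
      exact ⟨C, by simpa using hC⟩
    · have htop : A ⊔ Ideal.span {z} = ⊤ :=
        sup_span_eq_top_of_ringKrullDim_quotient_nonpos A hz (by simpa using hA)
      refine ⟨0, fun n => ?_⟩
      simpa [htop] using lenE_pow_sup_le_sum _ A hzm n
  | succ d ih =>
    rcases le_radical_or_exists_notMem_minimalPrimes A with hrad | ⟨z, hzm, hz⟩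
    · obtain ⟨C, hC⟩ := exists_lenE_pow_sup_le_const hrad
      refine ⟨C, fun n => (hC n).trans (Nat.cast_le.mpr ?_)⟩
      exact Nat.le_mul_of_pos_right C (by positivity)
    · have hdim : ringKrullDim (R ⧸ (A ⊔ Ideal.span {z})) ≤ d :=
        ENat.WithBot.add_le_add_natCast_right_iff.mp
          ((ringKrullDim_quotient_sup_span_add_one_le A hz).trans (by simpa using hA))
      obtain ⟨C, hC⟩ := ih hdim
      refine ⟨C, fun n => (lenE_pow_sup_le_sum _ A hzm n).trans ?_⟩
      calc ∑ i ∈ Finset.range n, lenE (maximalIdeal R ^ (i + 1) ⊔ (A ⊔ Ideal.span {z}))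
          ≤ ∑ i ∈ Finset.range n, ((C * (n + 1) ^ d : ℕ) : ℕ∞) := by
            refine Finset.sum_le_sum fun i hi => (hC (i + 1)).trans (Nat.cast_le.mpr ?_)
            have : i + 1 + 1 ≤ n + 1 := by simp at hi; omega
            gcongr
        _ = ((n * (C * (n + 1) ^ d) : ℕ) : ℕ∞) := by simp
        _ ≤ _ := by
            rw [pow_succ, mul_comm n, mul_assoc]
            exact Nat.cast_le.mpr (Nat.mul_le_mul_left _ (Nat.mul_le_mul_left _ n.le_succ))

-- The factor `n + 1` lets the statement cover `d = 0` too, where `c` is a unit.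
lemma exists_mul_lenE_pow_sup_span_le {c : R} {d : ℕ} (hd : ringKrullDim R = d)
    (hc : ∀ P ∈ minimalPrimes R, c ∉ P) :
    ∃ C : ℕ, ∀ n : ℕ,
      ((n + 1 : ℕ) : ℕ∞) * lenE (maximalIdeal R ^ n ⊔ Ideal.span {c}) ≤ (C * (n + 1) ^ d : ℕ) := by
  have hbot : ringKrullDim (R ⧸ (⊥ : Ideal R)) = d := by
    rw [ringKrullDim_eq_of_ringEquiv (RingEquiv.quotientBot R), hd]
  have hdim := ringKrullDim_quotient_sup_span_add_one_le ⊥ hc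
  rw [hbot, bot_sup_eq] at hdim
  cases d with
  | zero =>
    have htop := sup_span_eq_top_of_ringKrullDim_quotient_nonpos ⊥ hc (by simp [hbot])
    rw [bot_sup_eq] at htop
    exact ⟨0, by simp [htop]⟩
  | succ d =>
    obtain ⟨C, hC⟩ := exists_lenE_pow_sup_le
      (ENat.WithBot.add_le_add_one_right_iff.mp (by simpa using hdim))
    refine ⟨C, fun n => ?_⟩
    calc ((n + 1 : ℕ) : ℕ∞) * lenE (maximalIdeal R ^ n ⊔ Ideal.span {c})
        ≤ ((n + 1 : ℕ) : ℕ∞) * ((C * (n + 1) ^ d : ℕ) : ℕ∞) := by gcongr; exact hC n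
      _ = (C * (n + 1) ^ (d + 1) : ℕ) := by push_cast; ring

lemma exists_mul_qlen_fpow_sup_span_le {I : Ideal R} {c : R} {d N : ℕ}
    (hd : ringKrullDim R = d) (hc : ∀ P ∈ minimalPrimes R, c ∉ P)
    (hN : ∀ q, maximalIdeal R ^ (N * q) ≤ fpow I q) :
    ∃ K : ℕ, ∀ q, 1 ≤ q → q * qlen (fpow I q ⊔ Ideal.span {c}) ≤ K * q ^ d := by
  obtain ⟨C, hC⟩ := exists_mul_lenE_pow_sup_span_le hd hc
  refine ⟨C * (N + 2) ^ d, fun q hq => ?_⟩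
  obtain ⟨n, hn⟩ : ∃ n, n = (N + 1) * q := ⟨_, rfl⟩
  have hNn : N * q ≤ n := hn ▸ Nat.mul_le_mul_right q N.le_succ
  have hqn : q ≤ n + 1 := by nlinarith
  have hnq : n + 1 ≤ (N + 2) * q := by nlinarith
  have hle : maximalIdeal R ^ n ⊔ Ideal.span {c} ≤ fpow I q ⊔ Ideal.span {c} :=
    sup_le_sup_right ((Ideal.pow_le_pow_right hNn).trans (hN q)) _
  have hlen : (q : ℕ∞) * lenE (fpow I q ⊔ Ideal.span {c}) ≤ (C * (N + 2) ^ d * q ^ d : ℕ) :=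
    calc (q : ℕ∞) * lenE (fpow I q ⊔ Ideal.span {c})
        ≤ ((n + 1 : ℕ) : ℕ∞) * lenE (maximalIdeal R ^ n ⊔ Ideal.span {c}) :=
          mul_le_mul' (Nat.cast_le.mpr hqn) (lenE_antitone hle)
      _ ≤ (C * (n + 1) ^ d : ℕ) := hC n
      _ ≤ (C * (N + 2) ^ d * q ^ d : ℕ) := by
          rw [mul_assoc, ← mul_pow]
          exact Nat.cast_le.mpr (Nat.mul_le_mul_left _ (Nat.pow_le_pow_left hnq _))
  have := ENat.toNat_le_toNat hlen (ENat.natCast_ne_top _)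
  rwa [ENat.toNat_mul, ENat.toNat_natCast, ENat.toNat_natCast] at this

end

lemma tendsto_div_of_le_of_le_add {a b r : ℕ → ℕ} {p d K : ℕ} {L : ℝ} (hp : 1 < p)
    (hba : ∀ e, b e ≤ a e) (hab : ∀ e, a e ≤ b e + r e) (hr : ∀ e, p ^ e * r e ≤ K * (p ^ e) ^ d)
    (ha : Tendsto (fun e => (a e : ℝ) / (p : ℝ) ^ (d * e)) atTop (nhds L)) :
    Tendsto (fun e => (b e : ℝ) / (p : ℝ) ^ (d * e)) atTop (nhds L) := by
  have hp1 : (1 : ℝ) < p := by exact_mod_cast hp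
  have hgeo : Tendsto (fun e : ℕ => (K : ℝ) * (p : ℝ)⁻¹ ^ e) atTop (nhds 0) := by
    simpa using (tendsto_pow_atTop_nhds_zero_of_lt_one (by positivity)
      (inv_lt_one_of_one_lt₀ hp1)).const_mul (K : ℝ)
  refine ha.congr_dist (squeeze_zero (fun _ => dist_nonneg) (fun e => ?_) hgeo)
  have hdiff : (p : ℝ) ^ e * ((a e : ℝ) - b e) ≤ K * ((p : ℝ) ^ e) ^ d := by
    have h1 : (a e : ℝ) - b e ≤ r e := by
      have := hab e
      rw [sub_le_iff_le_add']
      exact_mod_cast this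
    have h2 : (p : ℝ) ^ e * r e ≤ K * ((p : ℝ) ^ e) ^ d := by exact_mod_cast hr e
    exact (mul_le_mul_of_nonneg_left h1 (by positivity)).trans h2
  have hsub : 0 ≤ (a e : ℝ) - b e := sub_nonneg.mpr (by exact_mod_cast hba e)
  rw [Real.dist_eq, ← sub_div, abs_of_nonneg (div_nonneg hsub (by positivity)), div_le_iff₀
    (by positivity), inv_pow, mul_comm d e, pow_mul, mul_assoc, inv_mul_eq_div, ← mul_div_assoc,
    le_div_iff₀ (by positivity)]
  linarith

theorem stmt9_general {R : Type*} [CommRing R] [IsNoetherianRing R] [IsLocalRing R]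
    (p : ℕ) (hp : p.Prime) (c : R) (hc : IsTestElement p c)
    (d : ℕ) (hd : ringKrullDim R = d)
    (I : Ideal R) (hI : I.radical = maximalIdeal R)
    (Iq : ℕ → Ideal R)
    (h1 : ∀ e : ℕ, fpow I (p ^ e) ≤ Iq e)
    (h2 : ∀ e : ℕ, Iq e ≤ tightClosure p (fpow I (p ^ e)))
    (eHK : ℝ)
    (hHK : Filter.Tendsto (fun e : ℕ => (qlen (fpow I (p ^ e)) : ℝ) / (p : ℝ) ^ (d * e))
      Filter.atTop (nhds eHK)) :
    Filter.Tendsto (fun e : ℕ => (qlen (Iq e) : ℝ) / (p : ℝ) ^ (d * e))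
      Filter.atTop (nhds eHK) := by
  obtain ⟨N, hN⟩ := exists_pow_mul_le_fpow (IsNoetherian.noetherian (maximalIdeal R)) hI.ge
  obtain ⟨K, hK⟩ := exists_mul_qlen_fpow_sup_span_le hd hc.1 hN
  have hfin (e : ℕ) : lenE (fpow I (p ^ e)) ≠ ⊤ :=
    lenE_ne_top_of_le_radical fun x hx => ⟨N * p ^ e, hN _ (Ideal.pow_mem_pow hx _)⟩
  have hcolon (e : ℕ) : Iq e ≤ (fpow I (p ^ e)).colon {c} := (h2 e).trans (hc.le_colon _)
  exact tendsto_div_of_le_of_le_add hp.one_lt (fun e => qlen_antitone (h1 e) (hfin e))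
    (fun e => qlen_le_qlen_add_qlen_sup_span (hfin e) (h1 e) (hcolon e))
    (fun e => hK _ (Nat.one_le_pow _ _ hp.pos)) hHK

/-- Any family of ideals squeezed between the Frobenius powers and
their tight closures computes the Hilbert–Kunz multiplicity. -/
theorem stmt9 {R : Type*} [CommRing R] [IsNoetherianRing R] [IsLocalRing R]
    (p : ℕ) (hp : p.Prime) [CharP R p] (c : R) (hc : IsTestElement p c)
    (d : ℕ) (hd : ringKrullDim R = d)
    (I : Ideal R) (hI : I.radical = maximalIdeal R)
    (Iq : ℕ → Ideal R)
    (h1 : ∀ e : ℕ, fpow I (p ^ e) ≤ Iq e)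
    (h2 : ∀ e : ℕ, Iq e ≤ tightClosure p (fpow I (p ^ e)))
    (eHK : ℝ)
    (hHK : Filter.Tendsto (fun e : ℕ => (qlen (fpow I (p ^ e)) : ℝ) / (p : ℝ) ^ (d * e))
      Filter.atTop (nhds eHK)) :
    Filter.Tendsto (fun e : ℕ => (qlen (Iq e) : ℝ) / (p : ℝ) ^ (d * e))
      Filter.atTop (nhds eHK) :=
  stmt9_general p hp c hc d hd I hI Iq h1 h2 eHK hHK
end
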